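/- Let G be a group satisfying (H1) and let H, K ∈ L(G). If H ∩ K ≤va H and H ∩ K ≤va K, then C_G(H) = C_G(K). -/

import Mathlib

/-!
Under (H1), if `K, W ∈ L(G)` and `W` contains the derived subgroup of a finite-index subgroup
`S` of `K`, then `K ∩ C(W) = 1`: this intersection lies in `L(G)`, and `S ∩ K ∩ C(W)` is
metabelian, since its derived subgroup lies in `W`, which it centralizes. Applied to the
commutators `[k, c]`, this shows that an element centralizing `H ∩ K` and normalizing `K`
centralizes `K`; so `C(H)` and `C(K)` meet the finite-index normal subgroup
`N = core(N(H) ∩ N(K))` in the same subgroup. An argument of the same kind shows that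
`X ∈ L(G)` and any `D ∈ L(G)` of finite index in `X` and normalized by `X` have the same
centralizer.
Hence `C(C(H)) = C(C(H) ∩ C(K)) = C(C(K))`, and one more centralizer gives `C(H) = C(K)`.
-/

variable {G : Type*} [Group G]

/-- The conjugate `B ^ g = g⁻¹ * B * g` of a subgroup `B` by an element `g`. -/
def conjBy (B : Subgroup G) (g : G) : Subgroup G :=
  B.map (MulAut.conj g⁻¹).toMonoidHom

/-- A subgroup is virtually solvable if it has a solvable subgroup of finite index. -/
def VirtSolvable (H : Subgroup G) : Prop :=
  ∃ M : Subgroup G, M ≤ H ∧ M.relIndex H ≠ 0 ∧ IsSolvable ↥M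

/-- A subgroup is virtually nilpotent if it has a nilpotent subgroup of finite index. -/
def VirtNilpotent (H : Subgroup G) : Prop :=
  ∃ M : Subgroup G, M ≤ H ∧ M.relIndex H ≠ 0 ∧ Group.IsNilpotent ↥M

/-- Hypothesis (H1): every virtually solvable subgroup whose normalizer has finite index
(i.e. belonging to `L(G)`) is trivial. -/
def HypH1 (G : Type*) [Group G] : Prop :=
  ∀ H : Subgroup G, (Subgroup.normalizer (H : Set G)).FiniteIndex → VirtSolvable H → H = ⊥

/-- Hypothesis (H2): every nontrivial normal subgroup of `G` contains the derived subgroup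
of some finite-index subgroup of `G`. -/
def HypH2 (G : Type*) [Group G] : Prop :=
  ∀ N : Subgroup G, N.Normal → N ≠ ⊥ →
    ∃ G₀ : Subgroup G, G₀.FiniteIndex ∧ ⁅G₀, G₀⁆ ≤ N

/-- `VA K H` means `K ≤va H`: `K ≤ H` and `K` contains the derived subgroup of some
finite-index subgroup of `H`. -/
def VA (K H : Subgroup G) : Prop :=
  K ≤ H ∧ ∃ A : Subgroup G, A ≤ H ∧ A.relIndex H ≠ 0 ∧ ⁅A, A⁆ ≤ K

/-- A subgroup `B` is basal if its normalizer has finite index and every conjugate of `B`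
either equals `B` or meets `B` trivially. -/
def IsBasal (B : Subgroup G) : Prop :=
  (Subgroup.normalizer (B : Set G)).FiniteIndex ∧ ∀ g : G, conjBy B g = B ∨ conjBy B g ⊓ B = ⊥

/-- The rigid normalizer `R(A)` of a basal subgroup `A`: the intersection of the
normalizers of all basal subgroups meeting `A` trivially. -/
def rigidNormalizer (A : Subgroup G) : Subgroup G :=
  ⨅ B ∈ {B : Subgroup G | IsBasal B ∧ A ⊓ B = ⊥}, Subgroup.normalizer (B : Set G)

open Subgroup ConjAct
open scoped Pointwise commutatorElement

namespace Subgroup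

theorem isSolvable_of_commutator_le_of_le_centralizer {M Y : Subgroup G} (hMY : ⁅M, M⁆ ≤ Y)
    (hM : M ≤ centralizer (Y : Set G)) : Group.IsSolvable M := by
  have hder : (derivedSeries M 1).map M.subtype = ⁅M, M⁆ := by
    rw [derivedSeries_one, _root_.commutator_def, map_commutator, ← MonoidHom.range_eq_map,
      range_subtype]
  have habel : ⁅⁅M, M⁆, ⁅M, M⁆⁆ = ⊥ :=
    commutator_eq_bot_iff_le_centralizer.mpr
      (((commutator_le_self M).trans hM).trans (centralizer_le hMY))
  refine ⟨2, map_injective M.subtype_injective ?_⟩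
  rw [derivedSeries_succ, map_commutator, hder, habel, Subgroup.map_bot]

theorem normalizer_le_normalizer_centralizer (A : Subgroup G) :
    normalizer (A : Set G) ≤ normalizer (centralizer (A : Set G) : Set G) := by
  intro g hg x
  simp only [SetLike.mem_coe, mem_centralizer_iff]
  constructor
  · intro hx h hh
    have := (Commute.conj_iff g).mpr (hx _ ((mem_normalizer_iff''.mp hg h).mp hh))
    rwa [show g * (g⁻¹ * h * g) * g⁻¹ = h by group] at this
  · intro hx h hh
    exact (Commute.conj_iff g).mp (hx _ ((mem_normalizer_iff.mp hg h).mp hh))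

theorem smul_commutator (g : ConjAct G) (A B : Subgroup G) : g • ⁅A, B⁆ = ⁅g • A, g • B⁆ :=
  map_commutator A B _

theorem commutatorElement_mem_sup_smul {K : Subgroup G} {k : G} (hk : k ∈ K) (c : G) :
    ⁅k, c⁆ ∈ K ⊔ toConjAct c • K := by
  have hck : c * k⁻¹ * c⁻¹ ∈ toConjAct c • K := by
    rw [← toConjAct_smul]
    exact smul_mem_pointwise_smul _ _ _ (inv_mem hk)
  rw [show ⁅k, c⁆ = k * (c * k⁻¹ * c⁻¹) by rw [commutatorElement_def]; group]
  exact mul_mem (mem_sup_left hk) (mem_sup_right hck)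

theorem commutatorElement_mem_centralizer_inf_smul {R : Subgroup G} {c : G}
    (hc : c ∈ centralizer (R : Set G)) (k : G) :
    ⁅k, c⁆ ∈ centralizer ((R ⊓ toConjAct k • R : Subgroup G) : Set G) := by
  rw [mem_centralizer_iff]
  intro x hx
  obtain ⟨hxR, hxkR⟩ := mem_inf.mp hx
  rw [mem_pointwise_smul_iff_inv_smul_mem, ← toConjAct_inv, toConjAct_smul,
    inv_inv] at hxkR
  have hx : Commute x (k * c * k⁻¹) := by
    have := (Commute.conj_iff k).mpr (mem_centralizer_iff.mp hc _ hxkR)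
    rwa [show k * (k⁻¹ * x * k) * k⁻¹ = x by group] at this
  have hx' : Commute x c⁻¹ := Commute.inv_right (mem_centralizer_iff.mp hc x hxR)
  rw [commutatorElement_def]
  exact (hx.mul_right hx').eq

theorem centralizer_centralizer_centralizer (s : Set G) :
    centralizer (centralizer (centralizer s : Set G) : Set G) = centralizer s :=
  SetLike.coe_injective (Set.centralizer_centralizer_centralizer s)

end Subgroup

/-- Membership in the paper's `L(G)`. -/
def HasFiniteIndexNormalizer (H : Subgroup G) : Prop :=
  (normalizer (H : Set G)).FiniteIndex

namespace HasFiniteIndexNormalizer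

variable {A B : Subgroup G}

theorem of_normalizer_le (hA : HasFiniteIndexNormalizer A)
    (h : normalizer (A : Set G) ≤ normalizer (B : Set G)) : HasFiniteIndexNormalizer B :=
  haveI : (normalizer (A : Set G)).FiniteIndex := hA
  finiteIndex_of_le h

theorem of_normal (hA : A.Normal) : HasFiniteIndexNormalizer A := by
  rw [HasFiniteIndexNormalizer, normalizer_eq_top_iff.mpr hA]
  infer_instance

theorem inf (hA : HasFiniteIndexNormalizer A) (hB : HasFiniteIndexNormalizer B) :
    HasFiniteIndexNormalizer (A ⊓ B) :=
  haveI : (normalizer (A : Set G)).FiniteIndex := hA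
  haveI : (normalizer (B : Set G)).FiniteIndex := hB
  finiteIndex_of_le inf_normalizer_le_normalizer_inf

theorem sup (hA : HasFiniteIndexNormalizer A) (hB : HasFiniteIndexNormalizer B) :
    HasFiniteIndexNormalizer (A ⊔ B) :=
  haveI : (normalizer (A : Set G)).FiniteIndex := hA
  haveI : (normalizer (B : Set G)).FiniteIndex := hB
  finiteIndex_of_le (normalizer_inf_normalizer_le_normalizer_sup A B)

theorem centralizer (hA : HasFiniteIndexNormalizer A) :
    HasFiniteIndexNormalizer (centralizer (A : Set G)) :=
  hA.of_normalizer_le (normalizer_le_normalizer_centralizer A)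

theorem smul (hA : HasFiniteIndexNormalizer A) (g : ConjAct G) :
    HasFiniteIndexNormalizer (g • A) := by
  have hN : normalizer ((g • A : Subgroup G) : Set G) = g • normalizer (A : Set G) :=
    (map_equiv_normalizer_eq A (MulDistribMulAction.toMulEquiv G g)).symm
  rw [HasFiniteIndexNormalizer, hN, finiteIndex_iff]
  exact (index_map_equiv _ (MulDistribMulAction.toMulEquiv G g)).trans_ne hA.index_ne_zero

end HasFiniteIndexNormalizer

namespace HypH1

theorem inf_centralizer_eq_bot (hH1 : HypH1 G) {K W S : Subgroup G}
    (hK : HasFiniteIndexNormalizer K) (hW : HasFiniteIndexNormalizer W) (hS : S.relIndex K ≠ 0)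
    (hSW : ⁅S, S⁆ ≤ W) : K ⊓ centralizer (W : Set G) = ⊥ := by
  refine hH1 _ (hK.inf hW.centralizer) ⟨S ⊓ (K ⊓ centralizer (W : Set G)), inf_le_right, ?_, ?_⟩
  · rw [inf_relIndex_right]
    exact mt (relIndex_eq_zero_of_le_right inf_le_left) hS
  · exact isSolvable_of_commutator_le_of_le_centralizer
      ((commutator_mono inf_le_left inf_le_left).trans hSW) (inf_le_right.trans inf_le_right)

theorem mem_centralizer_of_mem_normalizer (hH1 : HypH1 G) {K R A : Subgroup G}
    (hK : HasFiniteIndexNormalizer K) (hR : HasFiniteIndexNormalizer R) (hA : A.relIndex K ≠ 0)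
    (hAR : ⁅A, A⁆ ≤ R) {c : G} (hcR : c ∈ centralizer (R : Set G))
    (hcK : c ∈ normalizer (K : Set G)) : c ∈ centralizer (K : Set G) := by
  refine mem_centralizer_iff.mpr fun k hk => commutatorElement_eq_one_iff_commute.mp ?_
  have hkK : toConjAct k • K = K := conjAct_pointwise_smul_eq_self (le_normalizer hk)
  have hkA : (toConjAct k • A).relIndex K ≠ 0 := by
    rwa [← hkK, relIndex_pointwise_smul]
  have hkAR : ⁅toConjAct k • A, toConjAct k • A⁆ ≤ toConjAct k • R := by
    rw [← smul_commutator]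
    exact pointwise_smul_le_pointwise_smul_iff.mpr hAR
  have hbot : K ⊓ centralizer ((R ⊓ toConjAct k • R : Subgroup G) : Set G) = ⊥ :=
    hH1.inf_centralizer_eq_bot hK (hR.inf (hR.smul _)) (relIndex_inf_ne_zero hA hkA)
      (le_inf ((commutator_mono inf_le_left inf_le_left).trans hAR)
        ((commutator_mono inf_le_right inf_le_right).trans hkAR))
  have hkcK : ⁅k, c⁆ ∈ K := by
    have := commutatorElement_mem_sup_smul hk c
    rwa [conjAct_pointwise_smul_eq_self hcK, sup_idem] at this
  rw [← mem_bot, ← hbot]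
  exact ⟨hkcK, commutatorElement_mem_centralizer_inf_smul hcR k⟩

theorem centralizer_le_centralizer_of_le_normalizer (hH1 : HypH1 G) {X D : Subgroup G}
    (hX : HasFiniteIndexNormalizer X) (hD : HasFiniteIndexNormalizer D) (hDX : D.relIndex X ≠ 0)
    (hXD : X ≤ normalizer (D : Set G)) : centralizer (D : Set G) ≤ centralizer (X : Set G) := by
  intro c hc
  have hcD : toConjAct c • D = D := conjAct_pointwise_smul_eq_self (centralizer_le_normalizer _ hc)
  set X' := toConjAct c • X
  have hDX' : D.relIndex X' ≠ 0 := by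
    rwa [← hcD, relIndex_pointwise_smul]
  have hX'D : X' ≤ normalizer (D : Set G) := by
    rw [← conjAct_pointwise_smul_eq_self (le_normalizer (centralizer_le_normalizer _ hc))]
    exact pointwise_smul_le_pointwise_smul_iff.mpr hXD
  have hcent : ∀ Y : Subgroup G, HasFiniteIndexNormalizer Y → D.relIndex Y ≠ 0 →
      centralizer (D : Set G) ⊓ normalizer (Y : Set G) ≤ centralizer (Y : Set G) :=
    fun Y hY hDY m hm =>
      hH1.mem_centralizer_of_mem_normalizer hY hD hDY (commutator_le_self D) hm.1 hm.2
  set V := (X ⊔ X') ⊓ centralizer (D : Set G)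
  -- `V` is virtually abelian: its elements normalizing `X` and `X'` centralize both.
  have hV : V = ⊥ := by
    have : (normalizer (X : Set G)).FiniteIndex := hX
    have : (normalizer (X' : Set G)).FiniteIndex := hX.smul _
    refine hH1 V (((hX.sup (hX.smul _))).inf hD.centralizer)
      ⟨normalizer (X : Set G) ⊓ normalizer (X' : Set G) ⊓ V, inf_le_right, ?_, ?_⟩
    · rw [inf_relIndex_right]
      exact isFiniteRelIndex_iff_relIndex_ne_zero.mp isFiniteRelIndex_of_finiteIndex
    · refine isSolvable_of_commutator_le_of_le_centralizer (Y := X ⊔ X')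
        ((commutator_le_self _).trans (inf_le_right.trans inf_le_left)) ?_
      rw [le_centralizer_iff]
      refine sup_le (le_centralizer_iff.mp ?_) (le_centralizer_iff.mp ?_)
      · exact (le_inf (inf_le_right.trans inf_le_right) (inf_le_left.trans inf_le_left)).trans
          (hcent X hX hDX)
      · exact (le_inf (inf_le_right.trans inf_le_right) (inf_le_left.trans inf_le_right)).trans
          (hcent X' (hX.smul _) hDX')
  refine mem_centralizer_iff.mpr fun x hx => commutatorElement_eq_one_iff_commute.mp ?_
  have hxD : toConjAct x • D = D := conjAct_pointwise_smul_eq_self (hXD hx)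
  have hxc : ⁅x, c⁆ ∈ centralizer (D : Set G) := by
    have := commutatorElement_mem_centralizer_inf_smul hc x
    rwa [hxD, inf_idem] at this
  rw [← mem_bot, ← hV]
  exact ⟨commutatorElement_mem_sup_smul hx c, hxc⟩

theorem centralizer_inf_normal (hH1 : HypH1 G) {P N : Subgroup G}
    (hP : HasFiniteIndexNormalizer P) (hN : N.Normal) [N.FiniteIndex] :
    centralizer ((P ⊓ N : Subgroup G) : Set G) = centralizer (P : Set G) := by
  refine le_antisymm ?_ (centralizer_le inf_le_left)
  refine hH1.centralizer_le_centralizer_of_le_normalizer hP (hP.inf (.of_normal hN)) ?_ ?_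
  · rw [inf_comm, inf_relIndex_right]
    exact isFiniteRelIndex_iff_relIndex_ne_zero.mp isFiniteRelIndex_of_finiteIndex
  · exact (le_inf le_normalizer le_normalizer_of_normal).trans inf_normalizer_le_normalizer_inf

theorem centralizer_eq_of_inf_normal_le (hH1 : HypH1 G) {P Q N : Subgroup G}
    (hP : HasFiniteIndexNormalizer P) (hQ : HasFiniteIndexNormalizer Q) (hN : N.Normal)
    [N.FiniteIndex] (hPQ : P ⊓ N ≤ Q) (hQP : Q ⊓ N ≤ P) :
    centralizer (P : Set G) = centralizer (Q : Set G) := by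
  have key : ∀ {P Q : Subgroup G}, HasFiniteIndexNormalizer P → P ⊓ N ≤ Q →
      centralizer ((P ⊓ Q : Subgroup G) : Set G) = centralizer (P : Set G) := fun hP hPQ =>
    le_antisymm
      ((centralizer_le (le_inf inf_le_left hPQ)).trans (hH1.centralizer_inf_normal hP hN).le)
      (centralizer_le inf_le_left)
  rw [← key hP hPQ, inf_comm, key hQ hQP]

end HypH1

theorem statement4 (hH1 : HypH1 G) (H K : Subgroup G)
    (hHL : (Subgroup.normalizer (H : Set G)).FiniteIndex) (hKL : (Subgroup.normalizer (K : Set G)).FiniteIndex)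
    (h1 : VA (H ⊓ K) H) (h2 : VA (H ⊓ K) K) :
    Subgroup.centralizer (H : Set G) = Subgroup.centralizer (K : Set G) := by
  obtain ⟨-, A, -, hA, hAHK⟩ := h1
  obtain ⟨-, B, -, hB, hBHK⟩ := h2
  have hHK : HasFiniteIndexNormalizer (H ⊓ K) := HasFiniteIndexNormalizer.inf hHL hKL
  set N := (normalizer (H : Set G) ⊓ normalizer (K : Set G)).normalCore
  have hN : N ≤ normalizer (H : Set G) ⊓ normalizer (K : Set G) := normalCore_le _
  have hCHK : centralizer (H : Set G) ⊓ N ≤ centralizer (K : Set G) := fun c hc =>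
    hH1.mem_centralizer_of_mem_normalizer hKL hHK hB hBHK
      (centralizer_le inf_le_left hc.1) (hN hc.2).2
  have hCKH : centralizer (K : Set G) ⊓ N ≤ centralizer (H : Set G) := fun c hc =>
    hH1.mem_centralizer_of_mem_normalizer hHL hHK hA hAHK
      (centralizer_le inf_le_right hc.1) (hN hc.2).1
  have hCC := hH1.centralizer_eq_of_inf_normal_le (HasFiniteIndexNormalizer.centralizer hHL)
    (HasFiniteIndexNormalizer.centralizer hKL) (normalCore_normal _) hCHK hCKH
  rw [← centralizer_centralizer_centralizer, hCC, centralizer_centralizer_centralizer]
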